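/- arXiv:math/0305331 — 2 statements merged into one kernel-verified Lean document; each statement's English description precedes it below -/
import Mathlib

section
/- Let m ≥ 1, and let h, k ≥ 0 with 1 ≤ h + k ≤ m, and 0 ≤ ℓ ≤ m - h - k. Then the sum over all pairs (p, q) of finitely supported natural number sequences with Σ p_s = h, Σ q_s = k, and Σ s(p_s + q_s) = m - ℓ, of the coefficients m!/(ℓ! · Π_s (s!)^{p_s} p_s! (s!)^{q_s} q_s!), equals C(h+k, h) · C(m, ℓ) · S(m-ℓ, h+k), where S is the Stirling number of the second kind and C the binomial coefficient. -/
/-- Stirling numbers of the second kind. -/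
def stirling : ℕ → ℕ → ℕ
  | 0, 0 => 1
  | 0, _ + 1 => 0
  | _ + 1, 0 => 0
  | n + 1, j + 1 => (j + 1) * stirling n (j + 1) + stirling n j

/-!
Write `n = m - ℓ`; since `m! / ℓ! = C(m, ℓ) n!`, it suffices to show that
`T(n, h, k) := n! ∑ 1 / (w(p) w(q)) = C(h + k, h) S(n, h + k)` with `w(p) = ∏ s!^(p s) (p s)!`.
Reading `p s` and `q s` as the numbers of red and blue blocks of size `s`, the summand
`n! / (w(p) w(q))` counts the partitions of `{1, …, n}` of that coloured block type, and both sides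
satisfy `T(n + 1, h, k) = (h + k) T(n, h, k) + T(n, h - 1, k) + T(n, h, k - 1)`. On the left, write
`n + 1 = ∑ₛ s (p s + q s)` in the summand at `n + 1`: removing the element `n + 1` from its red
block of size `s` either deletes a singleton or leaves a block of size `s - 1`, which reindexes the
red part as `h T(n, h, k) + T(n, h - 1, k)`, and symmetrically for blue. On the right it is the
Stirling recurrence together with Pascal's rule.
-/

namespace FaaDiBruno

open Finset Finsupp Nat

def blockWeight (p : ℕ →₀ ℕ) : ℕ := p.prod fun s n => s ! ^ n * n !

lemma blockWeight_pos (p : ℕ →₀ ℕ) : 0 < blockWeight p :=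
  Finset.prod_pos fun s _ => Nat.mul_pos (pow_pos s.factorial_pos _) (factorial_pos _)

lemma blockWeight_add_single (p : ℕ →₀ ℕ) (s : ℕ) :
    blockWeight (p + single s 1) = blockWeight p * (s ! * (p s + 1)) := by
  have hg : ∀ i : ℕ, i ! ^ 0 * 0 ! = 1 := fun _ => rfl
  unfold blockWeight
  rw [← mul_prod_erase' p s (fun s n => s ! ^ n * n !) hg,
    ← mul_prod_erase' (p + single s 1) s (fun s n => s ! ^ n * n !) hg, erase_add,
    erase_single, add_zero]
  simp only [Finsupp.add_apply, single_eq_same, pow_succ, factorial_succ]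
  ring

lemma le_weight_id {p : ℕ →₀ ℕ} {s : ℕ} (hs : p s ≠ 0) : s ≤ weight id p :=
  le_weight_of_ne_zero' id hs

lemma apply_le_weight_id {p : ℕ →₀ ℕ} (hp : p 0 = 0) (s : ℕ) : p s ≤ weight id p := by
  rcases eq_or_ne s 0 with rfl | hs
  · simp [hp]
  · exact le_weight id hs p

lemma support_subset_range_weight_id (p : ℕ →₀ ℕ) :
    p.support ⊆ range (weight id p + 1) := fun _ hs =>
  mem_range.2 (Nat.lt_succ_of_le (le_weight_id (mem_support_iff.1 hs)))

lemma eq_zero_of_weight_id_eq_zero {p : ℕ →₀ ℕ} (hp : p 0 = 0) (h : weight id p = 0) :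
    p = 0 := by
  ext s
  simpa [h] using apply_le_weight_id hp s

lemma weight_id_eq_sum_range {p : ℕ →₀ ℕ} {N : ℕ} (h : p.support ⊆ range N) :
    weight id p = ∑ s ∈ range N, s * p s := by
  rw [weight_apply, sum_of_support_subset p h (fun i c => c • id i) (fun _ _ => zero_smul _ _)]
  simp [mul_comm]

lemma degree_eq_sum_range {p : ℕ →₀ ℕ} {N : ℕ} (h : p.support ⊆ range N) :
    degree p = ∑ s ∈ range N, p s :=
  sum_subset h fun _ _ hs => notMem_support_iff.1 hs

lemma weight_id_eq_sum (p : ℕ →₀ ℕ) : weight id p = p.sum fun s n => s * n := by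
  simp [weight_apply, mul_comm]

noncomputable def typePairs (n h k : ℕ) : Finset ((ℕ →₀ ℕ) × (ℕ →₀ ℕ)) :=
  let box := (range (n + 1)).finsupp fun _ => range (n + 1)
  (box ×ˢ box).filter fun pq => pq.1 0 = 0 ∧ pq.2 0 = 0 ∧ degree pq.1 = h ∧ degree pq.2 = k ∧
    weight id pq.1 + weight id pq.2 = n

lemma mem_finsupp_range_of_weight_id_le {p : ℕ →₀ ℕ} {n : ℕ} (hp : p 0 = 0)
    (hn : weight id p ≤ n) : p ∈ (range (n + 1)).finsupp fun _ => range (n + 1) := by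
  rw [mem_finsupp_iff]
  refine ⟨(support_subset_range_weight_id p).trans (range_subset_range.2 (by omega)),
    fun s _ => mem_range.2 ?_⟩
  have := apply_le_weight_id hp s
  omega

@[simp]
lemma mem_typePairs {n h k : ℕ} {pq : (ℕ →₀ ℕ) × (ℕ →₀ ℕ)} :
    pq ∈ typePairs n h k ↔ pq.1 0 = 0 ∧ pq.2 0 = 0 ∧ degree pq.1 = h ∧ degree pq.2 = k ∧
      weight id pq.1 + weight id pq.2 = n := by
  refine ⟨fun hpq => (mem_filter.1 hpq).2, fun hpq => mem_filter.2 ⟨mem_product.2 ⟨?_, ?_⟩, hpq⟩⟩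
  · exact mem_finsupp_range_of_weight_id_le hpq.1 (by omega)
  · exact mem_finsupp_range_of_weight_id_le hpq.2.1 (by omega)

lemma add_single_mem_typePairs {n h k s : ℕ} {r q : ℕ →₀ ℕ} :
    (r + single s 1, q) ∈ typePairs n h k ↔ r 0 = 0 ∧ s ≠ 0 ∧ q 0 = 0 ∧ degree r + 1 = h ∧
      degree q = k ∧ weight id r + s + weight id q = n := by
  rcases eq_or_ne s 0 with rfl | hs
  · simp
  · simp [hs, Ne.symm hs, weight_single]

noncomputable def invWeight (pq : (ℕ →₀ ℕ) × (ℕ →₀ ℕ)) : ℝ :=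
  ((blockWeight pq.1 * blockWeight pq.2 : ℕ) : ℝ)⁻¹

noncomputable def typeSum (n h k : ℕ) : ℝ := ∑ pq ∈ typePairs n h k, invWeight pq

lemma add_one_mul_invWeight_add_single (r q : ℕ →₀ ℕ) (s : ℕ) :
    ((r s : ℝ) + 1) * invWeight (r + single s 1, q) = invWeight (r, q) / s ! := by
  have := blockWeight_pos r
  have := blockWeight_pos q
  simp only [invWeight, blockWeight_add_single]
  push_cast
  field_simp

noncomputable def addBlock (s : ℕ) (rq : (ℕ →₀ ℕ) × (ℕ →₀ ℕ)) : (ℕ →₀ ℕ) × (ℕ →₀ ℕ) :=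
  (rq.1 + single s 1, rq.2)

lemma addBlock_injective (s : ℕ) : Function.Injective (addBlock s) := fun a b h => by
  simp only [addBlock, Prod.mk.injEq, add_left_inj] at h
  exact Prod.ext h.1 h.2

lemma sum_apply_mul_invWeight (A : Finset ((ℕ →₀ ℕ) × (ℕ →₀ ℕ))) (s : ℕ) :
    ∑ pq ∈ A, (pq.1 s : ℝ) * invWeight pq =
      (∑ rq ∈ A.preimage (addBlock s) (addBlock_injective s).injOn, invWeight rq) / s ! := by
  rw [← sum_preimage (addBlock s) A (addBlock_injective s).injOn, sum_div]
  · refine sum_congr rfl fun rq _ => ?_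
    simpa [addBlock] using add_one_mul_invWeight_add_single rq.1 rq.2 s
  · intro pq _ hpq
    suffices pq.1 s = 0 by simp [this]
    by_contra hs
    exact hpq ⟨(pq.1 - single s 1, pq.2), by simp [addBlock, sub_add_single_one_cancel hs]⟩

lemma support_fst_subset_range {n h k : ℕ} {pq : (ℕ →₀ ℕ) × (ℕ →₀ ℕ)}
    (hpq : pq ∈ typePairs n h k) : pq.1.support ⊆ range (n + 1) := by
  rw [mem_typePairs] at hpq
  exact (support_subset_range_weight_id _).trans (range_subset_range.2 (by omega))

lemma sum_apply_one_mul_invWeight (n h k : ℕ) :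
    ∑ pq ∈ typePairs (n + 1) (h + 1) k, (pq.1 1 : ℝ) * invWeight pq = typeSum n h k := by
  rw [sum_apply_mul_invWeight, factorial_one, cast_one, div_one, typeSum]
  congr 1
  ext ⟨r, q⟩
  rw [mem_preimage, addBlock, add_single_mem_typePairs, mem_typePairs]
  omega

lemma sum_apply_add_two_mul_invWeight (n h k t : ℕ) :
    ∑ pq ∈ typePairs (n + 1) h k, ((t + 1 + 1 : ℕ) : ℝ) * ((pq.1 (t + 1 + 1) : ℝ) * invWeight pq) =
      ∑ pq ∈ typePairs n h k, (pq.1 (t + 1) : ℝ) * invWeight pq := by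
  have hpre : (typePairs (n + 1) h k).preimage (addBlock (t + 1 + 1)) (addBlock_injective _).injOn =
      (typePairs n h k).preimage (addBlock (t + 1)) (addBlock_injective _).injOn := by
    ext ⟨r, q⟩
    rw [mem_preimage, mem_preimage, addBlock, addBlock, add_single_mem_typePairs,
      add_single_mem_typePairs]
    omega
  rw [← Finset.mul_sum, sum_apply_mul_invWeight, sum_apply_mul_invWeight, hpre,
    factorial_succ (t + 1)]
  push_cast
  field_simp

lemma sum_weight_id_mul_invWeight_succ (n h k : ℕ) :
    ∑ pq ∈ typePairs (n + 1) (h + 1) k, ((weight id pq.1 : ℕ) : ℝ) * invWeight pq =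
      typeSum n h k + (h + 1) * typeSum n (h + 1) k := by
  have hweight : ∑ pq ∈ typePairs (n + 1) (h + 1) k, ((weight id pq.1 : ℕ) : ℝ) * invWeight pq =
      ∑ s ∈ range (n + 2),
        ∑ pq ∈ typePairs (n + 1) (h + 1) k, (s : ℝ) * ((pq.1 s : ℝ) * invWeight pq) := by
    rw [Finset.sum_comm]
    refine sum_congr rfl fun pq hpq => ?_
    rw [weight_id_eq_sum_range (support_fst_subset_range hpq)]
    push_cast
    simp_rw [Finset.sum_mul, mul_assoc]
  have hdegree : ((h : ℝ) + 1) * typeSum n (h + 1) k =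
      ∑ t ∈ range (n + 1), ∑ pq ∈ typePairs n (h + 1) k, (pq.1 t : ℝ) * invWeight pq := by
    rw [typeSum, Finset.mul_sum, Finset.sum_comm]
    refine sum_congr rfl fun pq hpq => ?_
    rw [← Finset.sum_mul, ← cast_sum, ← degree_eq_sum_range (support_fst_subset_range hpq),
      (mem_typePairs.1 hpq).2.2.1]
    push_cast
    rfl
  have hzero : ∑ pq ∈ typePairs n (h + 1) k, (pq.1 0 : ℝ) * invWeight pq = 0 :=
    sum_eq_zero fun pq hpq => by simp [(mem_typePairs.1 hpq).1]
  rw [hweight, hdegree, sum_range_succ', sum_range_succ', sum_range_succ' _ n, hzero]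
  simp only [sum_apply_add_two_mul_invWeight, zero_add, cast_one, one_mul,
    sum_apply_one_mul_invWeight, cast_zero, zero_mul, sum_const_zero]
  ring

lemma sum_weight_id_mul_invWeight_zero (n k : ℕ) :
    ∑ pq ∈ typePairs n 0 k, ((weight id pq.1 : ℕ) : ℝ) * invWeight pq = 0 :=
  sum_eq_zero fun pq hpq => by
    simp [(degree_eq_zero_iff _).1 (mem_typePairs.1 hpq).2.2.1]

lemma succ_mul_typeSum_succ (n h k : ℕ) :
    ((n : ℝ) + 1) * typeSum (n + 1) h k =
      ∑ pq ∈ typePairs (n + 1) h k, ((weight id pq.1 : ℕ) : ℝ) * invWeight pq +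
        ∑ pq ∈ typePairs (n + 1) k h, ((weight id pq.1 : ℕ) : ℝ) * invWeight pq := by
  have hswap : ∑ pq ∈ typePairs (n + 1) h k, ((weight id pq.2 : ℕ) : ℝ) * invWeight pq =
      ∑ pq ∈ typePairs (n + 1) k h, ((weight id pq.1 : ℕ) : ℝ) * invWeight pq :=
    sum_equiv (Equiv.prodComm _ _) (fun _ => by simp [add_comm]; tauto) fun _ _ => by
      simp [invWeight, mul_comm]
  rw [← hswap, ← sum_add_distrib, typeSum, Finset.mul_sum]
  refine sum_congr rfl fun pq hpq => ?_
  rw [← add_mul, ← cast_add, (mem_typePairs.1 hpq).2.2.2.2]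
  push_cast
  rfl

lemma typeSum_zero (h k : ℕ) : typeSum 0 h k = if h = 0 ∧ k = 0 then 1 else 0 := by
  have hzero : ∀ pq ∈ typePairs 0 h k, pq = (0, 0) ∧ h = 0 ∧ k = 0 := by
    rintro ⟨p, q⟩ hpq
    obtain ⟨hp, hq, rfl, rfl, hw⟩ := mem_typePairs.1 hpq
    obtain rfl := eq_zero_of_weight_id_eq_zero hp (by omega)
    obtain rfl := eq_zero_of_weight_id_eq_zero hq (by omega)
    simp
  split_ifs with hhk
  · obtain ⟨rfl, rfl⟩ := hhk
    rw [typeSum,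
      sum_eq_single_of_mem (0, 0) (by simp) fun pq hpq hne => (hne (hzero pq hpq).1).elim]
    simp [invWeight, blockWeight]
  · exact sum_eq_zero fun pq hpq => (hhk (hzero pq hpq).2).elim

lemma stirling_succ_succ (n j : ℕ) :
    stirling (n + 1) (j + 1) = (j + 1) * stirling n (j + 1) + stirling n j := rfl

theorem factorial_mul_typeSum (n h k : ℕ) :
    (n ! : ℝ) * typeSum n h k = (h + k).choose h * stirling n (h + k) := by
  induction n generalizing h k with
  | zero =>
    rw [typeSum_zero]
    rcases h with _ | h <;> rcases k with _ | k <;> simp [stirling]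
  | succ n ih =>
    rw [factorial_succ, cast_mul, cast_succ, mul_comm ((n : ℝ) + 1), mul_assoc,
      succ_mul_typeSum_succ, mul_add]
    rcases h with _ | i <;> rcases k with _ | j
    · simp [sum_weight_id_mul_invWeight_zero, stirling]
    · rw [sum_weight_id_mul_invWeight_zero, sum_weight_id_mul_invWeight_succ, mul_add,
        mul_left_comm, ih, ih]
      simp only [zero_add, add_zero, choose_zero_right, choose_self, stirling_succ_succ]
      push_cast
      ring
    · rw [sum_weight_id_mul_invWeight_zero, sum_weight_id_mul_invWeight_succ, mul_add,
        mul_left_comm, ih, ih]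
      simp only [add_zero, choose_self, stirling_succ_succ]
      push_cast
      ring
    · simp only [sum_weight_id_mul_invWeight_succ, mul_add, mul_left_comm _ ((_ : ℝ) + 1), ih]
      obtain ⟨m, hm⟩ : ∃ m, i + j + 1 = m := ⟨_, rfl⟩
      have e1 : i + (j + 1) = m := by omega
      have e2 : j + (i + 1) = m := by omega
      have e3 : i + 1 + (j + 1) = m + 1 := by omega
      have e4 : j + 1 + (i + 1) = m + 1 := by omega
      rw [e1, e2, e3, e4, stirling_succ_succ,
        choose_symm_of_eq_add (n := m + 1) (a := j + 1) (b := i + 1) (by omega),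
        choose_symm_of_eq_add (n := m) (a := j) (b := i + 1) (by omega), choose_succ_succ' m i]
      subst hm
      push_cast
      ring

end FaaDiBruno

open FaaDiBruno Finset Nat in
theorem stmt4_general (m h k ℓ : ℕ) (hl : ℓ ≤ m - h - k) :
    (∑ᶠ pq ∈ {pq : (ℕ →₀ ℕ) × (ℕ →₀ ℕ) |
        pq.1 0 = 0 ∧ pq.2 0 = 0 ∧
        pq.1.sum (fun _ n => n) = h ∧ pq.2.sum (fun _ n => n) = k ∧
        pq.1.sum (fun s n => s * n) + pq.2.sum (fun s n => s * n) = m - ℓ},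
      (Nat.factorial m : ℝ) /
        ((Nat.factorial ℓ : ℝ) *
          ((pq.1.prod fun s n => Nat.factorial s ^ n * Nat.factorial n : ℕ) : ℝ) *
          ((pq.2.prod fun s n => Nat.factorial s ^ n * Nat.factorial n : ℕ) : ℝ)))
    = (Nat.choose (h + k) h : ℝ) * (Nat.choose m ℓ : ℝ) * (stirling (m - ℓ) (h + k) : ℝ) := by
  have hset : {pq : (ℕ →₀ ℕ) × (ℕ →₀ ℕ) | pq.1 0 = 0 ∧ pq.2 0 = 0 ∧
        pq.1.sum (fun _ n => n) = h ∧ pq.2.sum (fun _ n => n) = k ∧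
        pq.1.sum (fun s n => s * n) + pq.2.sum (fun s n => s * n) = m - ℓ} =
      typePairs (m - ℓ) h k := by
    ext pq
    simp only [Set.mem_ofPred_eq, mem_coe, mem_typePairs, weight_id_eq_sum]
    rfl
  have hfactorial : (m ! : ℝ) = m.choose ℓ * ℓ ! * (m - ℓ)! := by
    rw [← choose_mul_factorial_mul_factorial (show ℓ ≤ m by omega)]
    push_cast
    rfl
  have hterm : ∀ pq ∈ typePairs (m - ℓ) h k,
      (m ! : ℝ) / (ℓ ! * (blockWeight pq.1 : ℝ) * (blockWeight pq.2 : ℝ)) =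
        m.choose ℓ * ((m - ℓ)! * invWeight pq) := fun pq _ => by
    rw [hfactorial, invWeight, cast_mul]
    field_simp
  rw [hset, finsum_mem_coe_finset]
  refine (sum_congr rfl hterm).trans ?_
  rw [← Finset.mul_sum, ← Finset.mul_sum, ← typeSum, factorial_mul_typeSum]
  ring

theorem stmt4 (m h k ℓ : ℕ) (hm : 1 ≤ m) (hhk1 : 1 ≤ h + k) (hhkm : h + k ≤ m)
    (hl : ℓ ≤ m - h - k) :
    (∑ᶠ pq ∈ {pq : (ℕ →₀ ℕ) × (ℕ →₀ ℕ) |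
        pq.1 0 = 0 ∧ pq.2 0 = 0 ∧
        pq.1.sum (fun _ n => n) = h ∧ pq.2.sum (fun _ n => n) = k ∧
        pq.1.sum (fun s n => s * n) + pq.2.sum (fun s n => s * n) = m - ℓ},
      (Nat.factorial m : ℝ) /
        ((Nat.factorial ℓ : ℝ) *
          ((pq.1.prod fun s n => Nat.factorial s ^ n * Nat.factorial n : ℕ) : ℝ) *
          ((pq.2.prod fun s n => Nat.factorial s ^ n * Nat.factorial n : ℕ) : ℝ)))
    = (Nat.choose (h + k) h : ℝ) * (Nat.choose m ℓ : ℝ) * (stirling (m - ℓ) (h + k) : ℝ) :=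
  stmt4_general m h k ℓ hl
end

section
/- Let T, U be C¹ tensor fields on ℝ^d of orders ℓ and m with values in ⊗^ℓ ℂ^d and ⊗^m ℂ^d. Define the symmetrized derivative ∇_𝒮 T := 𝒮(∇T), where (∇T)_{λ₁...λ_{ℓ+1}} := ∂_{λ_{ℓ+1}} T_{λ₁...λ_ℓ} and 𝒮 is symmetrization. Then the symmetrized Leibnitz rule holds: ∇_𝒮(T ∨ U) = (∇_𝒮 T) ∨ U + T ∨ (∇_𝒮 U). -/
/-!
Symmetrization is invariant under permuting the indices of its argument, so it absorbs inner
symmetrizations: `𝒮(𝒮A ⊗ B) = 𝒮(A ⊗ B) = 𝒮(A ⊗ 𝒮B)`, and, since `∂_λ` commutes with permuting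
the undifferentiated indices, `𝒮∇(𝒮W) = 𝒮∇W`. Hence `∇_𝒮(T ∨ U) = 𝒮∇(T ⊗ U)`, and the ordinary
Leibniz rule `∇(T ⊗ U) = (∇T ⊗ U)∘π + T ⊗ ∇U`, where `π` moves the differentiation index of `∇T`
to the last slot, gives the claim after absorbing `π` and reinserting the inner symmetrizations.
-/

/-- A complex tensor of order `n` on `ℂ^d`. -/
abbrev Tensor (d n : ℕ) := (Fin n → Fin d) → ℂ

/-- The tensor product, concatenating index tuples. -/
def tensProd {d ℓ m : ℕ} (T : Tensor d ℓ) (U : Tensor d m) : Tensor d (ℓ + m) :=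
  fun lam => T (fun i => lam (Fin.castAdd m i)) * U (fun i => lam (Fin.natAdd ℓ i))

/-- Symmetrization of a tensor. -/
noncomputable def symmT {d n : ℕ} (T : Tensor d n) : Tensor d n :=
  fun lam => (1 / (Nat.factorial n : ℂ)) * ∑ σ : Equiv.Perm (Fin n), T (lam ∘ σ)

/-- Symmetrized tensor product. -/
noncomputable def vee {d ℓ m : ℕ} (T : Tensor d ℓ) (U : Tensor d m) : Tensor d (ℓ + m) :=
  symmT (tensProd T U)

/-- Reindexing a tensor along an equality of orders. -/
def tcast {d n n' : ℕ} (h : n = n') (T : Tensor d n) : Tensor d n' :=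
  fun lam => T (fun i => lam (Fin.cast h i))

/-- The derivative of a tensor field on `ℝ^d`: the differentiation index is appended
as the last index, `(∇T)_{λ₁...λ_{ℓ+1}} = ∂_{λ_{ℓ+1}} T_{λ₁...λ_ℓ}`. -/
noncomputable def tgrad {d ℓ : ℕ} (T : EuclideanSpace ℝ (Fin d) → Tensor d ℓ) :
    EuclideanSpace ℝ (Fin d) → Tensor d (ℓ + 1) :=
  fun x lam =>
    fderiv ℝ (fun y => T y (fun i => lam (Fin.castSucc i))) x
      (EuclideanSpace.single (lam (Fin.last ℓ)) 1)

/-- The symmetrized derivative `∇_𝒮 T = 𝒮(∇ T)` of a tensor field. -/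
noncomputable def tgradS {d ℓ : ℕ} (T : EuclideanSpace ℝ (Fin d) → Tensor d ℓ) :
    EuclideanSpace ℝ (Fin d) → Tensor d (ℓ + 1) :=
  fun x => symmT (tgrad T x)

section Symmetrization

variable {d : ℕ}

lemma symmT_comp_perm {n : ℕ} (V : Tensor d n) (ρ : Equiv.Perm (Fin n)) :
    symmT (fun lam => V (lam ∘ ρ)) = symmT V := by
  funext lam
  simp only [symmT]
  congr 1
  exact Fintype.sum_equiv (Equiv.mulRight ρ) _ _ fun _ => rfl

lemma symmT_comp_equiv {n n' : ℕ} (h : n = n') (V : Tensor d n) (e : Fin n ≃ Fin n') :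
    symmT (fun lam => V (lam ∘ e)) = tcast h (symmT V) := by
  subst h
  exact symmT_comp_perm V e

lemma symmT_add {n : ℕ} (A B : Tensor d n) : symmT (A + B) = symmT A + symmT B := by
  funext lam
  simp [symmT, Finset.sum_add_distrib, mul_add]

lemma symmT_average_comp_perm {n k : ℕ} (V : Tensor d n)
    (π : Equiv.Perm (Fin k) → Equiv.Perm (Fin n)) :
    symmT (fun lam => (1 / (k.factorial : ℂ)) * ∑ σ, V (lam ∘ π σ)) = symmT V := by
  have hk : (k.factorial : ℂ) ≠ 0 := by exact_mod_cast k.factorial_ne_zero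
  funext lam
  have hσ : ∀ σ, symmT (fun lam => V (lam ∘ π σ)) lam = symmT V lam := fun σ => by
    rw [symmT_comp_perm]
  calc symmT (fun lam => (1 / (k.factorial : ℂ)) * ∑ σ, V (lam ∘ π σ)) lam
      = (1 / (k.factorial : ℂ)) * ∑ σ, symmT (fun lam => V (lam ∘ π σ)) lam := by
        simp only [symmT, Finset.mul_sum]
        rw [Finset.sum_comm]
        ring_nf
    _ = symmT V lam := by
        simp only [hσ, Finset.sum_const, Finset.card_univ, Fintype.card_perm, Fintype.card_fin,
          nsmul_eq_mul]
        field_simp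

end Symmetrization

section PermLift

variable {ℓ m : ℕ}

def permCastAdd (m : ℕ) (σ : Equiv.Perm (Fin ℓ)) : Equiv.Perm (Fin (ℓ + m)) :=
  finSumFinEquiv.permCongr (σ.sumCongr 1)

def permNatAdd (ℓ : ℕ) (σ : Equiv.Perm (Fin m)) : Equiv.Perm (Fin (ℓ + m)) :=
  finSumFinEquiv.permCongr ((1 : Equiv.Perm (Fin ℓ)).sumCongr σ)

@[simp] lemma permCastAdd_castAdd (σ : Equiv.Perm (Fin ℓ)) (i : Fin ℓ) :
    permCastAdd m σ (Fin.castAdd m i) = Fin.castAdd m (σ i) := by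
  simp [permCastAdd, Equiv.permCongr_apply]

@[simp] lemma permCastAdd_natAdd (σ : Equiv.Perm (Fin ℓ)) (i : Fin m) :
    permCastAdd m σ (Fin.natAdd ℓ i) = Fin.natAdd ℓ i := by
  simp [permCastAdd, Equiv.permCongr_apply]

@[simp] lemma permCastAdd_last (σ : Equiv.Perm (Fin ℓ)) :
    permCastAdd 1 σ (Fin.last ℓ) = Fin.last ℓ :=
  permCastAdd_natAdd σ 0

@[simp] lemma permCastAdd_castSucc (σ : Equiv.Perm (Fin ℓ)) (i : Fin ℓ) :
    permCastAdd 1 σ i.castSucc = (σ i).castSucc :=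
  permCastAdd_castAdd σ i

@[simp] lemma permNatAdd_castAdd (σ : Equiv.Perm (Fin m)) (i : Fin ℓ) :
    permNatAdd ℓ σ (Fin.castAdd m i) = Fin.castAdd m i := by
  simp [permNatAdd, Equiv.permCongr_apply]

@[simp] lemma permNatAdd_natAdd (σ : Equiv.Perm (Fin m)) (i : Fin m) :
    permNatAdd ℓ σ (Fin.natAdd ℓ i) = Fin.natAdd ℓ (σ i) := by
  simp [permNatAdd, Equiv.permCongr_apply]

end PermLift

section TensorProduct

variable {d ℓ m : ℕ}

lemma tensProd_symmT_left (A : Tensor d ℓ) (B : Tensor d m) :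
    tensProd (symmT A) B = fun lam =>
      (1 / (ℓ.factorial : ℂ)) * ∑ σ, tensProd A B (lam ∘ permCastAdd m σ) := by
  funext lam
  simp only [tensProd, symmT, Function.comp_def, permCastAdd_castAdd, permCastAdd_natAdd]
  rw [mul_assoc, Finset.sum_mul]

lemma tensProd_symmT_right (A : Tensor d ℓ) (B : Tensor d m) :
    tensProd A (symmT B) = fun lam =>
      (1 / (m.factorial : ℂ)) * ∑ σ, tensProd A B (lam ∘ permNatAdd ℓ σ) := by
  funext lam
  simp only [tensProd, symmT, Function.comp_def, permNatAdd_castAdd, permNatAdd_natAdd]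
  rw [mul_left_comm, Finset.mul_sum]

lemma symmT_tensProd_symmT_left (A : Tensor d ℓ) (B : Tensor d m) :
    symmT (tensProd (symmT A) B) = symmT (tensProd A B) := by
  rw [tensProd_symmT_left, symmT_average_comp_perm]

lemma symmT_tensProd_symmT_right (A : Tensor d ℓ) (B : Tensor d m) :
    symmT (tensProd A (symmT B)) = symmT (tensProd A B) := by
  rw [tensProd_symmT_right, symmT_average_comp_perm]

end TensorProduct

section Gradient

variable {d : ℕ}

lemma tgrad_symmT {n : ℕ} (W : EuclideanSpace ℝ (Fin d) → Tensor d n)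
    (x : EuclideanSpace ℝ (Fin d)) (hW : ∀ lam, DifferentiableAt ℝ (fun y => W y lam) x) :
    tgrad (fun y => symmT (W y)) x = fun lam =>
      (1 / (n.factorial : ℂ)) * ∑ σ, tgrad W x (lam ∘ permCastAdd 1 σ) := by
  funext lam
  simp only [tgrad, symmT, Function.comp_def]
  rw [fderiv_const_mul (DifferentiableAt.fun_sum fun σ _ => hW _), fderiv_fun_sum fun σ _ => hW _]
  simp only [smul_apply, sum_apply, smul_eq_mul, permCastAdd_castSucc, permCastAdd_last]

lemma symmT_tgrad_symmT {n : ℕ} (W : EuclideanSpace ℝ (Fin d) → Tensor d n)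
    (x : EuclideanSpace ℝ (Fin d)) (hW : ∀ lam, DifferentiableAt ℝ (fun y => W y lam) x) :
    symmT (tgrad (fun y => symmT (W y)) x) = symmT (tgrad W x) := by
  rw [tgrad_symmT W x hW, symmT_average_comp_perm]

end Gradient

section Leibniz

variable {d ℓ m : ℕ}

noncomputable def moveToLast (ℓ m : ℕ) : Fin (ℓ + 1 + m) ≃ Fin (ℓ + m + 1) :=
  Equiv.ofBijective
    (fun j => if (j : ℕ) < ℓ then ⟨j, by omega⟩
      else if (j : ℕ) = ℓ then Fin.last (ℓ + m) else ⟨j - 1, by omega⟩)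
    (by
      rw [Fintype.bijective_iff_injective_and_card]
      refine ⟨fun a b hab => ?_, by simp only [Fintype.card_fin]; omega⟩
      simp only at hab
      split_ifs at hab <;> simp only [Fin.ext_iff, Fin.val_last] at hab <;>
        exact Fin.ext (by omega))

@[simp] lemma moveToLast_castAdd_castSucc (i : Fin ℓ) :
    moveToLast ℓ m (Fin.castAdd m i.castSucc) = (Fin.castAdd m i).castSucc := by
  simp [moveToLast, Fin.ext_iff]

@[simp] lemma moveToLast_castAdd_last :
    moveToLast ℓ m (Fin.castAdd m (Fin.last ℓ)) = Fin.last (ℓ + m) := by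
  simp [moveToLast]

@[simp] lemma moveToLast_natAdd (i : Fin m) :
    moveToLast ℓ m (Fin.natAdd (ℓ + 1) i) = (Fin.natAdd ℓ i).castSucc := by
  simp only [moveToLast, Equiv.ofBijective_apply, Fin.val_natAdd]
  rw [if_neg (by omega), if_neg (by omega)]
  ext
  simp only [Fin.val_castSucc, Fin.val_natAdd]
  omega

lemma tgrad_tensProd (T : EuclideanSpace ℝ (Fin d) → Tensor d ℓ)
    (U : EuclideanSpace ℝ (Fin d) → Tensor d m) (x : EuclideanSpace ℝ (Fin d))
    (hT : ∀ lam, DifferentiableAt ℝ (fun y => T y lam) x)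
    (hU : ∀ lam, DifferentiableAt ℝ (fun y => U y lam) x) :
    tgrad (fun y => tensProd (T y) (U y)) x =
      (fun lam => tensProd (tgrad T x) (U x) (lam ∘ moveToLast ℓ m)) +
        tensProd (T x) (tgrad U x) := by
  funext lam
  change fderiv ℝ (fun y => T y _ * U y _) x _ = _
  rw [fderiv_fun_mul (hT _) (hU _)]
  simp only [Pi.add_apply, add_apply, smul_apply, smul_eq_mul, tensProd, tgrad,
    Function.comp_apply, moveToLast_castAdd_castSucc, moveToLast_castAdd_last, moveToLast_natAdd,
    Fin.castSucc_castAdd, Fin.natAdd_castSucc, Fin.natAdd_last]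
  ring

end Leibniz

theorem stmt10 (d ℓ m : ℕ) (T : EuclideanSpace ℝ (Fin d) → Tensor d ℓ)
    (U : EuclideanSpace ℝ (Fin d) → Tensor d m)
    (hT : ∀ lam, ContDiff ℝ 1 fun x => T x lam)
    (hU : ∀ lam, ContDiff ℝ 1 fun x => U x lam) :
    tgradS (fun y => vee (T y) (U y)) =
      fun x =>
        tcast (Nat.add_right_comm ℓ 1 m) (vee (tgradS T x) (U x)) +
          tcast (show ℓ + (m + 1) = ℓ + m + 1 from rfl) (vee (T x) (tgradS U x)) := by
  funext x
  have hTx : ∀ lam, DifferentiableAt ℝ (fun y => T y lam) x :=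
    fun lam => (hT lam).differentiable one_ne_zero x
  have hUx : ∀ lam, DifferentiableAt ℝ (fun y => U y lam) x :=
    fun lam => (hU lam).differentiable one_ne_zero x
  change symmT (tgrad (fun y => symmT (tensProd (T y) (U y))) x) = _
  rw [symmT_tgrad_symmT (fun y => tensProd (T y) (U y)) x fun _ => (hTx _).mul (hUx _),
    tgrad_tensProd T U x hTx hUx, symmT_add, symmT_comp_equiv (Nat.add_right_comm ℓ 1 m)]
  simp only [vee, tgradS, symmT_tensProd_symmT_left, symmT_tensProd_symmT_right]
  rfl
end
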